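/- Let k ≥ 2 and let G be the graph on 2k+1 vertices {v, v_1, …, v_k, u_1, …, u_k} with edges vv_i for 1 ≤ i ≤ k, v_iu_i for 1 ≤ i ≤ k, and u_iu_j for all 1 ≤ i < j ≤ k. Then both G and its complement have diameter 2. -/
import Mathlib


open SimpleGraph

/-- A coloring `c` (using colors `< k`) makes `G` rainbow vertex-connected: every pair of
vertices is joined by a path whose internal vertices receive distinct colors (all `< k`). -/
def IsRainbowVCColoring {V : Type*} (G : SimpleGraph V) (c : V → ℕ) (k : ℕ) : Prop :=
  ∀ u v : V, ∃ p : G.Walk u v, p.IsPath ∧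
    (p.support.tail.dropLast.map c).Nodup ∧
    ∀ x ∈ p.support.tail.dropLast, c x < k

/-- The rainbow vertex-connection number: the least number of colors making `G`
rainbow vertex-connected. -/
noncomputable def rvc {V : Type*} (G : SimpleGraph V) : ℕ :=
  sInf {k | ∃ c : V → ℕ, IsRainbowVCColoring G c k}

/-- The graph on `2k+1` vertices: hub `none`, vertices `v_i = some (inl i)`,
`u_i = some (inr i)`; edges `v v_i`, `v_i u_i`, and `u_i u_j` for `i ≠ j`. -/
def oddExample (k : ℕ) : SimpleGraph (Option (Fin k ⊕ Fin k)) :=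
  SimpleGraph.fromRel (fun x y =>
    match x, y with
    | none, some (Sum.inl _) => True
    | some (Sum.inl i), some (Sum.inr j) => i = j
    | some (Sum.inr _), some (Sum.inr _) => True
    | _, _ => False)

lemma my_ediam_eq_two {V : Type*} (G : SimpleGraph V)
    (h2 : ∀ u v, G.edist u v ≤ 2) {u v : V} (hne : u ≠ v) (hna : ¬G.Adj u v) :
    G.ediam = 2 := by
  refine le_antisymm (ediam_le_iff.mpr h2) ?_
  refine le_trans ?_ (edist_le_ediam (u := u) (v := v))
  have h0 : 1 ≤ G.edist u v := Order.one_le_iff_pos.mpr (G.edist_pos_of_ne hne)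
  have h1 : G.edist u v ≠ 1 := fun h => hna (edist_eq_one_iff_adj.mp h)
  have : (1 : ℕ∞) < G.edist u v := lt_of_le_of_ne h0 (Ne.symm h1)
  exact Order.add_one_le_of_lt this

lemma my_edist_le_one {V : Type*} {G : SimpleGraph V} {u v : V} (h : G.Adj u v) :
    G.edist u v ≤ 2 := by
  refine le_trans (G.edist_le (Walk.cons h Walk.nil)) ?_
  simp

lemma my_edist_le_two {V : Type*} {G : SimpleGraph V} {u v w : V}
    (h1 : G.Adj u w) (h2 : G.Adj w v) : G.edist u v ≤ 2 := by
  refine le_trans (G.edist_le (Walk.cons h1 (Walk.cons h2 Walk.nil))) ?_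
  simp

theorem oddExample_diam (k : ℕ) (hk : 2 ≤ k) :
    (oddExample k).diam = 2 ∧ (oddExample k)ᶜ.diam = 2 := by
  have hnt : Nontrivial (Fin k) := Fin.nontrivial_iff_two_le.mpr hk
  set G := oddExample k with hG
  -- adjacency facts
  have A1 : ∀ i : Fin k, G.Adj none (some (Sum.inl i)) := by intro i; simp [hG, oddExample]
  have A2 : ∀ i : Fin k, G.Adj (some (Sum.inl i)) (some (Sum.inr i)) := by
    intro i; simp [hG, oddExample]
  have A3 : ∀ i j : Fin k, i ≠ j → G.Adj (some (Sum.inr i)) (some (Sum.inr j)) := by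
    intro i j h; simp [hG, oddExample, h]
  have B1 : ∀ i : Fin k, Gᶜ.Adj none (some (Sum.inr i)) := by
    intro i; simp [compl_adj, hG, oddExample]
  have B2 : ∀ i j : Fin k, i ≠ j → Gᶜ.Adj (some (Sum.inl i)) (some (Sum.inl j)) := by
    intro i j h; simp [compl_adj, hG, oddExample, h]
  have B3 : ∀ i j : Fin k, i ≠ j → Gᶜ.Adj (some (Sum.inl i)) (some (Sum.inr j)) := by
    intro i j h; simp [compl_adj, hG, oddExample, h, h.symm]
  have hGle : ∀ u v, G.edist u v ≤ 2 := by
    rintro (_ | i | i) (_ | j | j)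
    · simp [edist_self]
    · exact my_edist_le_one (A1 j)
    · exact my_edist_le_two (A1 j) (A2 j)
    · exact my_edist_le_one (A1 i).symm
    · rcases eq_or_ne i j with rfl | h
      · simp [edist_self]
      · exact my_edist_le_two (A1 i).symm (A1 j)
    · rcases eq_or_ne i j with rfl | h
      · exact my_edist_le_one (A2 i)
      · exact my_edist_le_two (A2 i) (A3 i j h)
    · exact my_edist_le_two (A2 i).symm (A1 i).symm
    · rcases eq_or_ne i j with rfl | h
      · exact my_edist_le_one (A2 i).symm
      · exact my_edist_le_two (A3 i j h) (A2 j).symm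
    · rcases eq_or_ne i j with rfl | h
      · simp [edist_self]
      · exact my_edist_le_one (A3 i j h)
  have hCle : ∀ u v, Gᶜ.edist u v ≤ 2 := by
    rintro (_ | i | i) (_ | j | j)
    · simp [edist_self]
    · obtain ⟨m, hm⟩ := exists_ne j
      exact my_edist_le_two (B1 m) (B3 j m (Ne.symm hm)).symm
    · exact my_edist_le_one (B1 j)
    · obtain ⟨m, hm⟩ := exists_ne i
      exact my_edist_le_two (B3 i m (Ne.symm hm)) (B1 m).symm
    · rcases eq_or_ne i j with rfl | h
      · simp [edist_self]
      · exact my_edist_le_one (B2 i j h)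
    · rcases eq_or_ne i j with h | h
      · subst h
        obtain ⟨m, hm⟩ := exists_ne i
        exact my_edist_le_two (B2 i m (Ne.symm hm)) (B3 m i hm)
      · exact my_edist_le_one (B3 i j h)
    · exact my_edist_le_one (B1 i).symm
    · rcases eq_or_ne i j with h | h
      · subst h
        obtain ⟨m, hm⟩ := exists_ne i
        exact my_edist_le_two (B3 m i hm).symm (B2 m i hm)
      · exact my_edist_le_one (B3 j i (Ne.symm h)).symm
    · rcases eq_or_ne i j with rfl | h
      · simp [edist_self]
      · exact my_edist_le_two (B1 i).symm (B1 j)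
  have hk0 : 0 < k := by omega
  have i0 : Fin k := ⟨0, hk0⟩
  have hGna : ¬ G.Adj none (some (Sum.inr i0)) := by simp [hG, oddExample]
  have hCna : ¬ Gᶜ.Adj none (some (Sum.inl i0)) := by
    simp only [compl_adj, not_and, not_not]
    intro _; exact A1 i0
  have hGe : G.ediam = 2 := my_ediam_eq_two G hGle (by simp) hGna
  have hCe : Gᶜ.ediam = 2 := my_ediam_eq_two Gᶜ hCle (by simp) hCna
  constructor
  · rw [diam, hGe]; rfl
  · rw [diam, hCe]; rfl
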